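/- arXiv:1606.04228 — 2 statements merged into one kernel-verified Lean document; each statement's English description precedes it below -/
import Mathlib

section
/- For a supercritical BPRE with p₀(ξ₀) = 0 a.s. and ℙ(Z₁ = 1 | Z₀ = 1) > 0, fix k ≥ 1, let r_k solve γ_k = 𝔼[m₀^{−r_k}] and assume 𝔼[m₀^{r_k + ε}] < ∞ for some ε > 0. Then for every t ∈ [0, 1) the sequence G_{k,n}(t)/γ_k^n is nondecreasing in n and converges to Q_k(t) = Σ_{j=k}^∞ q_{k,j} t^j, where G_{k,n}(t) = 𝔼_k[t^{Zₙ}] is the probability generating function of Zₙ when Z₀ = k. -/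
open MeasureTheory ProbabilityTheory Filter
open scoped ENNReal Topology ProbabilityTheory

noncomputable section

/-- `convPow p i e j` is the probability that a sum of `i` i.i.d. random variables,
each distributed according to the offspring law `p · e`, equals `j`;
i.e. the `i`-fold convolution of the offspring law determined by the environment
value `e`.  Thus `convPow p i e` is the quenched one-step transition law of a
branching process from state `i` under the environment value `e`. -/
def convPow {E : Type*} (p : ℕ → E → ℝ) : ℕ → E → ℕ → ℝ
  | 0, _, j => if j = 0 then 1 else 0
  | i + 1, e, j => ∑ l ∈ Finset.range (j + 1), convPow p i e l * p (j - l) e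

/-- The canonical filtration on the trajectory space `ℕ → ℕ`:
`trajFiltration n` is the σ-algebra generated by the coordinates `0, …, n`. -/
def trajFiltration (n : ℕ) : MeasurableSpace (ℕ → ℕ) :=
  ⨆ i ∈ Finset.range (n + 1), MeasurableSpace.comap (fun z : ℕ → ℕ => z i) ⊤

/-- A branching process in an i.i.d. random environment (BPRE).
The environment is a sequence of i.i.d. random variables with values in `E`
(its law is the measure `μenv` on the sequence space), each value `e : E`
determining an offspring law `p · e` (i.e. a generating function
`f(e, t) = ∑ pᵢ(e) tⁱ`).  `K k` is the quenched law of the whole trajectory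
`(Z_n)_{n ≥ 0}` of the branching process starting from `Z_0 = k`, given the
environment sequence: under `K k e`, `(Z_n)` starts at `k` and its one-step
conditional transition laws are the convolution powers `convPow p (Z_n) (e n)`
of the offspring laws — which is exactly the law of the process
`Z_{n+1} = ∑_{i=1}^{Z_n} N_{n,i}` where, conditionally on the environment, the
`N_{n,i}` (i ≥ 1) are i.i.d. with generating function `f(e n, ·)` and
independent of `Z_n`. -/
structure BPRE (E : Type*) [MeasurableSpace E] where
  /-- the offspring distributions determined by an environment value -/
  p : ℕ → E → ℝ
  p_meas : ∀ i, Measurable (p i)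
  p_nonneg : ∀ i e, 0 ≤ p i e
  p_tsum : ∀ e, ∑' i, p i e = 1
  /-- quenched law of the trajectory of `(Z_n)` with `Z_0 = k`, given the environment -/
  K : ℕ → Kernel (ℕ → E) (ℕ → ℕ)
  K_markov : ∀ k, IsMarkovKernel (K k)
  K_zero : ∀ k e, K k e {z | z 0 = k} = 1
  K_step : ∀ k e n j (A : Set (ℕ → ℕ)), MeasurableSet[trajFiltration n] A →
    K k e ({z | z (n + 1) = j} ∩ A)
      = ∫⁻ z in A, ENNReal.ofReal (convPow p (z n) (e n) j) ∂(K k e)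
  /-- the law of the i.i.d. environment sequence `ξ = (ξ₀, ξ₁, …)` -/
  μenv : Measure (ℕ → E)
  μenv_prob : IsProbabilityMeasure μenv
  μenv_iid : iIndepFun (fun n (e : ℕ → E) => e n) μenv
  μenv_ident : ∀ n, Measure.map (fun e : ℕ → E => e n) μenv
      = Measure.map (fun e : ℕ → E => e 0) μenv

namespace BPRE

variable {E : Type*} [MeasurableSpace E] (b : BPRE E)

/-- The law `ν` (that of `ξ₀`) of one environment component. -/
def ν : Measure E := b.μenv.map fun e => e 0

/-- `m e` : the mean number of offspring `m₀ = ∑ i pᵢ(e)` of one individual under the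
environment value `e`. -/
def m (e : E) : ℝ := ∑' i : ℕ, (i : ℝ) * b.p i e

/-- `Π_n = m₀ ⋯ m_{n-1}` along the environment sequence `e`. -/
def PiEnv (n : ℕ) (e : ℕ → E) : ℝ := ∏ j ∈ Finset.range n, b.m (e j)

/-- The annealed law `ℙ_k` of the pair (environment, trajectory) when `Z_0 = k`. -/
def P (k : ℕ) : Measure ((ℕ → E) × (ℕ → ℕ)) :=
  haveI := b.μenv_prob
  haveI := b.K_markov k
  Measure.compProd b.μenv (b.K k)

/-- The annealed probability `ℙ_k (Z_n = j)`. -/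
def probZ (k n j : ℕ) : ℝ := (b.P k {ω | ω.2 n = j}).toReal

/-- `γ_k = ℙ_k(Z_1 = k) = 𝔼[p₁(ξ₀)^k]`. -/
def γ (k : ℕ) : ℝ := ∫ e, b.p 1 (e 0) ^ k ∂b.μenv

/-- The normalized population limit `W = lim_n Z_n / Π_n` (defined via `limsup`, which
agrees a.s. with the limit of the nonnegative martingale `W_n = Z_n / Π_n`). -/
def W (ω : (ℕ → E) × (ℕ → ℕ)) : ℝ :=
  limsup (fun n => (ω.2 n : ℝ) / b.PiEnv n ω.1) atTop

/-- The quenched limit variable `W` under a fixed environment sequence `e`. -/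
def Wq (e : ℕ → E) (z : ℕ → ℕ) : ℝ :=
  limsup (fun n => (z n : ℝ) / b.PiEnv n e) atTop

/-- The quenched Laplace transform `φ_ξ(t) = 𝔼_ξ[e^{-tW}]` (with `Z_0 = 1`). -/
def phiq (e : ℕ → E) (t : ℝ) : ℝ := ∫ z, Real.exp (-t * b.Wq e z) ∂(b.K 1 e)

/-- The annealed Laplace transform `φ_k(t) = 𝔼_k[e^{-tW}]` (with `Z_0 = k`). -/
def phi (k : ℕ) (t : ℝ) : ℝ := ∫ ω, Real.exp (-t * b.W ω) ∂(b.P k)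

/-- Standing assumptions: the process is supercritical (`𝔼 log m₀ ∈ (0,∞)`) and each
individual gives birth to at least one child (`p₀(ξ₀) = 0` a.s.). -/
def Standing : Prop :=
  Integrable (fun e : ℕ → E => Real.log (b.m (e 0))) b.μenv ∧
  (0 < ∫ e, Real.log (b.m (e 0)) ∂b.μenv) ∧
  (∀ᵐ e ∂b.μenv, b.p 0 (e 0) = 0)

/-- The moment assumption `𝔼[(Z₁/m₀) log⁺ Z₁] < ∞`, which ensures `W_n → W` in
`L¹(ℙ)` and `ℙ(W > 0) = 1`. -/
def ZlogZ : Prop :=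
  Integrable (fun ω : (ℕ → E) × (ℕ → ℕ) =>
    ((ω.2 1 : ℝ) / b.m (ω.1 0)) * Real.log (max ((ω.2 1 : ℝ)) 1)) (b.P 1)

end BPRE

/-!
Under the annealed law `(Zₙ)` is a Markov chain on `ℕ` whose transition probabilities
`T(i, j) = 𝔼[ℙ_ξ(i individuals have j children in total)]` do not depend on time, because `ξₙ`
is independent of `ξ₀, …, ξₙ₋₁`, which determine the quenched law of `Zₙ`. Since
`T(k, k) ≥ γ_k`, every ratio `ℙ_k(Zₙ = j) / γ_kⁿ` increases in `n` to `q_{k,j}`; hence so does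
`G_{k,n}(t) / γ_kⁿ`, and monotone convergence identifies the limit as `Q_k(t)` as soon as these
ratios are bounded.

For the bound, `p₀ = 0` gives `f_ξ(t) ≤ t (p₁ + (1 - p₁) t)`, so from a state `i ≥ I` one step
multiplies `t^i` by at most `β_I = 𝔼[(p₁(ξ₀) + (1 - p₁(ξ₀)) t)^I]`, which tends to
`ℙ(p₁(ξ₀) = 1)`. This probability is `< γ_k`: otherwise `𝔼[m₀^{-r_k}] = γ_k` forces `m₀ ∈ {0, 1}`
a.s., contradicting `𝔼 log m₀ > 0`. With `β_I < γ_k` we get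
`G_{n+1} ≤ C γ_kⁿ + β_I Gₙ`, whence `Gₙ = O(γ_kⁿ)`.
-/

section RealSequences

theorem monotone_div_pow_of_mul_le_succ {u : ℕ → ℝ} {γ : ℝ} (hγ : 0 < γ)
    (h : ∀ n, γ * u n ≤ u (n + 1)) : Monotone fun n => u n / γ ^ n := by
  refine monotone_nat_of_le_succ fun n => ?_
  rw [div_le_div_iff₀ (pow_pos hγ n) (pow_pos hγ (n + 1)), pow_succ]
  nlinarith [mul_le_mul_of_nonneg_right (h n) (pow_pos hγ n).le]

theorem div_pow_le_max_of_le_add_mul {u : ℕ → ℝ} {C γ ρ : ℝ} (hρ : 0 ≤ ρ) (hργ : ρ < γ)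
    (h : ∀ n, u (n + 1) ≤ C * γ ^ n + ρ * u n) (n : ℕ) :
    u n / γ ^ n ≤ max (u 0) (C / (γ - ρ)) := by
  set M := max (u 0) (C / (γ - ρ))
  have hC : C ≤ M * (γ - ρ) := (div_le_iff₀ (by linarith)).mp (le_max_right _ _)
  induction n with
  | zero => simp [M]
  | succ n ih =>
    have hγn : 0 < γ ^ n := pow_pos (by linarith) n
    rw [div_le_iff₀ hγn] at ih
    rw [div_le_iff₀ (pow_pos (by linarith) _), pow_succ]
    nlinarith [h n, mul_le_mul_of_nonneg_right hC hγn.le, mul_le_mul_of_nonneg_left ih hρ]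

theorem tendsto_tsum_of_monotone_of_tsum_le {β : Type*} {f : ℕ → β → ℝ} {g : β → ℝ} {M : ℝ}
    (hf : ∀ n j, 0 ≤ f n j) (hmono : ∀ j, Monotone (f · j))
    (hlim : ∀ j, Tendsto (f · j) atTop (𝓝 (g j)))
    (hsum : ∀ n, Summable (f n)) (hM : ∀ n, ∑' j, f n j ≤ M) :
    Monotone (fun n => ∑' j, f n j) ∧ Tendsto (fun n => ∑' j, f n j) atTop (𝓝 (∑' j, g j)) := by
  have hfg : ∀ n j, f n j ≤ g j := fun n j => (hmono j).ge_of_tendsto (hlim j) n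
  have hg : Summable g := by
    refine summable_of_sum_le (c := M) (fun j => (hf 0 j).trans (hfg 0 j)) fun s => ?_
    refine le_of_tendsto' (tendsto_finsetSum s fun j _ => hlim j) fun n => ?_
    exact ((hsum n).sum_le_tsum s fun j _ => hf n j).trans (hM n)
  refine ⟨fun n m hnm => (hsum n).tsum_le_tsum (fun j => hmono j hnm) (hsum m), ?_⟩
  refine tendsto_tsum_of_dominated_convergence hg hlim (Eventually.of_forall fun n j => ?_)
  rw [Real.norm_of_nonneg (hf n j)]
  exact hfg n j

end RealSequences

section Discrete

variable {Ω X : Type*} [MeasurableSpace Ω] [MeasurableSpace X] [Countable X]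
  [MeasurableSingletonClass X]

theorem lintegral_comp_eq_tsum (μ : Measure Ω) {h : Ω → X} (hh : Measurable h) (f : X → ℝ≥0∞) :
    ∫⁻ ω, f (h ω) ∂μ = ∑' x, f x * μ {ω | h ω = x} := by
  rw [← lintegral_map (measurable_of_countable f) hh, lintegral_countable']
  simp_rw [Measure.map_apply hh (measurableSet_singleton _)]
  rfl

theorem hasSum_integral_of_countable {μ : Measure X} {f : X → ℝ} (hf : Integrable f μ) :
    HasSum (fun x => μ.real {x} * f x) (∫ x, f x ∂μ) := by
  rw [← Measure.sum_smul_dirac μ] at hf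
  have h := hasSum_integral_measure hf
  rw [Measure.sum_smul_dirac μ] at h
  simpa [integral_smul_measure, measureReal_def] using h

end Discrete

open Finset.HasAntidiagonal in
theorem ENNReal.tsum_mul_tsum_eq_tsum_sum_range (f g : ℕ → ℝ≥0∞) :
    (∑' n, f n) * ∑' n, g n = ∑' n, ∑ k ∈ Finset.range (n + 1), f k * g (n - k) := by
  have h : ∀ n, ∑ k ∈ Finset.range (n + 1), f k * g (n - k)
      = ∑' x : antidiagonal n, f (x : ℕ × ℕ).1 * g (x : ℕ × ℕ).2 := fun n => by
    rw [← Finset.Nat.sum_antidiagonal_eq_sum_range_succ fun k l => f k * g l,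
      ← Finset.sum_finset_coe, tsum_fintype]
    rfl
  calc (∑' n, f n) * ∑' n, g n = ∑' x : ℕ × ℕ, f x.1 * g x.2 := by
        rw [ENNReal.tsum_prod (f := fun a b => f a * g b), ← ENNReal.tsum_mul_right]
        simp_rw [ENNReal.tsum_mul_left]
    _ = ∑' x : (Σ n : ℕ, antidiagonal n), f (x.2 : ℕ × ℕ).1 * g (x.2 : ℕ × ℕ).2 :=
        (sigmaAntidiagonalEquivProd.tsum_eq (fun x : ℕ × ℕ => f x.1 * g x.2)).symm
    _ = _ := by
        rw [ENNReal.tsum_sigma']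
        simp_rw [h]

section ConvPow

variable {E : Type*} {p : ℕ → E → ℝ}

theorem convPow_nonneg (hp : ∀ i e, 0 ≤ p i e) (i : ℕ) (e : E) (j : ℕ) :
    0 ≤ convPow p i e j := by
  induction i generalizing j with
  | zero => simp only [convPow]; split_ifs <;> norm_num
  | succ i ih => exact Finset.sum_nonneg fun l _ => mul_nonneg (ih l) (hp _ e)

theorem measurable_convPow [MeasurableSpace E] (hp : ∀ i, Measurable (p i)) (i j : ℕ) :
    Measurable fun e => convPow p i e j := by
  induction i generalizing j with
  | zero => simp only [convPow]; exact measurable_const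
  | succ i ih =>
    simp only [convPow]
    exact Finset.measurable_sum _ fun l _ => (ih l).mul (hp (j - l))

theorem convPow_one (e : E) (j : ℕ) : convPow p 1 e j = p j e := by
  simp [convPow]

theorem pow_le_convPow_self (hp : ∀ i e, 0 ≤ p i e) (i : ℕ) (e : E) :
    p 1 e ^ i ≤ convPow p i e i := by
  induction i with
  | zero => simp [convPow]
  | succ i ih =>
    calc p 1 e ^ (i + 1) ≤ convPow p i e i * p (i + 1 - i) e := by
          rw [Nat.add_sub_cancel_left, pow_succ]
          exact mul_le_mul_of_nonneg_right ih (hp 1 e)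
      _ ≤ convPow p (i + 1) e (i + 1) :=
          Finset.single_le_sum (f := fun l => convPow p i e l * p (i + 1 - l) e)
            (fun l _ => mul_nonneg (convPow_nonneg hp i e l) (hp _ e)) (by simp)

theorem convPow_eq_zero_of_lt {e : E} (hp0 : p 0 e = 0) {i j : ℕ} (hji : j < i) :
    convPow p i e j = 0 := by
  induction i generalizing j with
  | zero => exact absurd hji (Nat.not_lt_zero j)
  | succ i ih =>
    refine Finset.sum_eq_zero fun l hl => ?_
    rcases lt_or_ge l i with hli | hil
    · rw [ih hli, zero_mul]
    · have : j - l = 0 := by simp at hl; omega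
      rw [this, hp0, mul_zero]

theorem tsum_ofReal_convPow_mul_pow (hp : ∀ i e, 0 ≤ p i e) (i : ℕ) (e : E) (s : ℝ≥0∞) :
    ∑' j, ENNReal.ofReal (convPow p i e j) * s ^ j
      = (∑' d, ENNReal.ofReal (p d e) * s ^ d) ^ i := by
  induction i with
  | zero =>
    rw [pow_zero, tsum_eq_single 0 fun j hj => by simp [convPow, hj]]
    simp [convPow]
  | succ i ih =>
    rw [pow_succ, ← ih, ENNReal.tsum_mul_tsum_eq_tsum_sum_range]
    refine tsum_congr fun j => ?_
    simp only [convPow]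
    rw [ENNReal.ofReal_sum_of_nonneg fun l _ => mul_nonneg (convPow_nonneg hp i e l) (hp _ e),
      Finset.sum_mul]
    refine Finset.sum_congr rfl fun l hl => ?_
    rw [ENNReal.ofReal_mul (convPow_nonneg hp i e l),
      ← pow_mul_pow_sub s (Finset.mem_range_succ_iff.mp hl)]
    ring

end ConvPow

abbrev pastEnv (E : Type*) [MeasurableSpace E] (n : ℕ) : MeasurableSpace (ℕ → E) :=
  ⨆ l ∈ Set.Iio n, MeasurableSpace.comap (fun e : ℕ → E => e l) ‹_›

section PastEnv

variable {E : Type*} [MeasurableSpace E]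

theorem pastEnv_le (n : ℕ) : pastEnv E n ≤ MeasurableSpace.pi :=
  iSup₂_le fun l _ => (measurable_pi_apply l).comap_le

theorem pastEnv_mono : Monotone (pastEnv E) :=
  fun _ _ hmn => biSup_mono fun _ hl => lt_of_lt_of_le hl hmn

theorem measurable_eval_pastEnv {l n : ℕ} (hln : l < n) :
    Measurable[pastEnv E n] fun e : ℕ → E => e l :=
  Measurable.of_comap_le <|
    le_iSup₂ (f := fun l (_ : l ∈ Set.Iio n) => MeasurableSpace.comap (fun e : ℕ → E => e l) ‹_›)
      l hln

end PastEnv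

namespace BPRE

variable {E : Type*} [MeasurableSpace E] (b : BPRE E)

instance isProbabilityMeasure_μenv : IsProbabilityMeasure b.μenv := b.μenv_prob

instance isMarkovKernel_K (k : ℕ) : IsMarkovKernel (b.K k) := b.K_markov k

instance isProbabilityMeasure_P (k : ℕ) : IsProbabilityMeasure (b.P k) := by
  unfold P
  infer_instance

theorem summable_p (x : E) : Summable fun i => b.p i x := by
  by_contra h
  simpa [tsum_eq_zero_of_not_summable h] using b.p_tsum x

theorem p_le_one (i : ℕ) (x : E) : b.p i x ≤ 1 :=
  le_of_le_of_eq ((b.summable_p x).le_tsum i fun j _ => b.p_nonneg j x) (b.p_tsum x)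

theorem p_eq_zero_of_p_one_eq_one {x : E} (h : b.p 1 x = 1) {i : ℕ} (hi : i ≠ 1) :
    b.p i x = 0 := by
  have hle := (b.summable_p x).sum_le_tsum {1, i} fun d _ => b.p_nonneg d x
  rw [Finset.sum_pair hi.symm, b.p_tsum x, h] at hle
  linarith [b.p_nonneg i x]

theorem m_nonneg (x : E) : 0 ≤ b.m x :=
  tsum_nonneg fun i => mul_nonneg (Nat.cast_nonneg i) (b.p_nonneg i x)

theorem m_eq_one_of_p_one_eq_one {x : E} (h : b.p 1 x = 1) : b.m x = 1 := by
  rw [m, tsum_eq_single 1 fun i hi => by rw [b.p_eq_zero_of_p_one_eq_one h hi, mul_zero], h]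
  norm_num

theorem integrable_p_one_pow (k : ℕ) : Integrable (fun e : ℕ → E => b.p 1 (e 0) ^ k) b.μenv := by
  refine Integrable.of_bound
    (((b.p_meas 1).comp (measurable_pi_apply 0)).pow_const k).aestronglyMeasurable 1
    (ae_of_all _ fun e => ?_)
  rw [Real.norm_of_nonneg (pow_nonneg (b.p_nonneg 1 (e 0)) k)]
  exact pow_le_one₀ (b.p_nonneg 1 (e 0)) (b.p_le_one 1 (e 0))

theorem γ_nonneg (k : ℕ) : 0 ≤ b.γ k :=
  integral_nonneg fun e => pow_nonneg (b.p_nonneg 1 (e 0)) k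

theorem K_apply_zero (k j : ℕ) (e : ℕ → E) :
    b.K k e {z | z 0 = j} = if j = k then 1 else 0 := by
  split_ifs with hjk
  · subst hjk
    exact b.K_zero j e
  · refine measure_mono_null (t := {z | z 0 = k}ᶜ) (fun z hz hz' => hjk (hz.symm.trans hz'))
      ((prob_compl_eq_zero_iff (measurableSet_eq_fun (measurable_pi_apply 0) measurable_const)).mpr
        (b.K_zero k e))

theorem K_apply_succ (k n j : ℕ) (e : ℕ → E) :
    b.K k e {z | z (n + 1) = j}
      = ∑' i, ENNReal.ofReal (convPow b.p i (e n) j) * b.K k e {z | z n = i} := by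
  have h := b.K_step k e n j Set.univ MeasurableSet.univ
  rw [Set.inter_univ, Measure.restrict_univ] at h
  exact h.trans (lintegral_comp_eq_tsum _ (h := fun z : ℕ → ℕ => z n) (measurable_pi_apply n)
    fun i => ENNReal.ofReal (convPow b.p i (e n) j))

theorem measurable_K_apply (k n j : ℕ) :
    Measurable[pastEnv E n] fun e => b.K k e {z | z n = j} := by
  induction n generalizing j with
  | zero =>
    simp_rw [K_apply_zero]
    exact measurable_const
  | succ n ih =>
    simp_rw [K_apply_succ, ENNReal.tsum_eq_iSup_sum]
    refine Measurable.iSup fun s => Finset.measurable_sum s fun i _ => Measurable.mul ?_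
      ((ih i).mono (pastEnv_mono n.le_succ) le_rfl)
    exact (measurable_convPow b.p_meas i j).ennreal_ofReal.comp
      (measurable_eval_pastEnv n.lt_succ_self)

theorem indep_eval_pastEnv (n : ℕ) :
    Indep (MeasurableSpace.comap (fun e : ℕ → E => e n) ‹_›) (pastEnv E n) b.μenv := by
  have h := indep_iSup_of_disjoint (fun l => (measurable_pi_apply l).comap_le) b.μenv_iid.iIndep
    (T := Set.Iio n) (Set.disjoint_singleton_left.mpr (lt_irrefl n))
  rwa [iSup_singleton] at h

theorem lintegral_comp_eval_eq_eval_zero (g : E → ℝ≥0∞) (hg : Measurable g) (n : ℕ) :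
    ∫⁻ e, g (e n) ∂b.μenv = ∫⁻ e, g (e 0) ∂b.μenv := by
  rw [← lintegral_map hg (measurable_pi_apply n), b.μenv_ident n,
    lintegral_map hg (measurable_pi_apply 0)]

def transProb (i j : ℕ) : ℝ≥0∞ := ∫⁻ e, ENNReal.ofReal (convPow b.p i (e 0) j) ∂b.μenv

theorem P_apply_eq_lintegral (k n j : ℕ) :
    b.P k {ω | ω.2 n = j} = ∫⁻ e, b.K k e {z | z n = j} ∂b.μenv :=
  Measure.compProd_apply
    (measurableSet_eq_fun ((measurable_pi_apply n).comp measurable_snd) measurable_const)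

theorem P_apply_zero (k j : ℕ) : b.P k {ω | ω.2 0 = j} = if j = k then 1 else 0 := by
  simp_rw [P_apply_eq_lintegral, K_apply_zero]
  split_ifs <;> simp

theorem P_apply_succ (k n j : ℕ) :
    b.P k {ω | ω.2 (n + 1) = j} = ∑' i, b.P k {ω | ω.2 n = i} * b.transProb i j := by
  have hconv : ∀ i, Measurable fun x : E => ENNReal.ofReal (convPow b.p i x j) :=
    fun i => (measurable_convPow b.p_meas i j).ennreal_ofReal
  simp_rw [P_apply_eq_lintegral, K_apply_succ]
  rw [lintegral_tsum fun i => (show Measurable fun e : ℕ → E =>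
    ENNReal.ofReal (convPow b.p i (e n) j) * b.K k e {z | z n = i} from
      ((hconv i).comp (measurable_pi_apply n)).mul
        ((b.measurable_K_apply k n i).mono (pastEnv_le n) le_rfl)).aemeasurable]
  refine tsum_congr fun i => ?_
  rw [lintegral_mul_eq_lintegral_mul_lintegral_of_independent_measurableSpace
    (f := fun e : ℕ → E => ENNReal.ofReal (convPow b.p i (e n) j))
    (measurable_pi_apply n).comap_le (pastEnv_le n) (b.indep_eval_pastEnv n)
    ((hconv i).comp (comap_measurable _)) (b.measurable_K_apply k n i),
    b.lintegral_comp_eval_eq_eval_zero _ (hconv i), mul_comm, transProb]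

theorem P_apply_one (k j : ℕ) : b.P k {ω | ω.2 1 = j} = b.transProb k j := by
  rw [P_apply_succ, tsum_eq_single k fun i hi => by rw [P_apply_zero, if_neg hi, zero_mul],
    P_apply_zero, if_pos rfl, one_mul]

theorem P_apply_succ' (k n j : ℕ) :
    b.P k {ω | ω.2 (n + 1) = j} = ∑' l, b.transProb k l * b.P l {ω | ω.2 n = j} := by
  induction n generalizing j with
  | zero =>
    rw [P_apply_one,
      tsum_eq_single j fun l hl => by rw [P_apply_zero, if_neg (Ne.symm hl), mul_zero],
      P_apply_zero, if_pos rfl, mul_one]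
  | succ n ih =>
    rw [P_apply_succ]
    simp_rw [ih, P_apply_succ, ← ENNReal.tsum_mul_right, ← ENNReal.tsum_mul_left]
    rw [ENNReal.tsum_comm]
    simp_rw [mul_assoc]

theorem ofReal_γ_le_transProb_self (k : ℕ) : ENNReal.ofReal (b.γ k) ≤ b.transProb k k := by
  rw [γ, ofReal_integral_eq_lintegral_ofReal (b.integrable_p_one_pow k)
    (ae_of_all _ fun e => pow_nonneg (b.p_nonneg 1 (e 0)) k)]
  exact lintegral_mono fun e => ENNReal.ofReal_le_ofReal (pow_le_convPow_self b.p_nonneg k (e 0))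

theorem transProb_eq_zero_of_lt (hp0 : ∀ᵐ e ∂b.μenv, b.p 0 (e 0) = 0) {i j : ℕ} (hji : j < i) :
    b.transProb i j = 0 := by
  rw [transProb, lintegral_congr_ae (g := fun _ => 0), lintegral_zero]
  filter_upwards [hp0] with e he
  rw [convPow_eq_zero_of_lt he hji, ENNReal.ofReal_zero]

theorem P_apply_eq_zero_of_lt (hp0 : ∀ᵐ e ∂b.μenv, b.p 0 (e 0) = 0) (n : ℕ) {k j : ℕ}
    (hjk : j < k) : b.P k {ω | ω.2 n = j} = 0 := by
  induction n generalizing k with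
  | zero => rw [P_apply_zero, if_neg hjk.ne]
  | succ n ih =>
    rw [P_apply_succ', ENNReal.tsum_eq_zero]
    intro l
    rcases lt_or_ge l k with hlk | hkl
    · rw [b.transProb_eq_zero_of_lt hp0 hlk, zero_mul]
    · rw [ih (hjk.trans_le hkl), mul_zero]

theorem γ_mul_probZ_le (k n j : ℕ) : b.γ k * b.probZ k n j ≤ b.probZ k (n + 1) j := by
  have h : ENNReal.ofReal (b.γ k) * b.P k {ω | ω.2 n = j} ≤ b.P k {ω | ω.2 (n + 1) = j} := by
    rw [P_apply_succ']
    exact (mul_le_mul_left (b.ofReal_γ_le_transProb_self k) _).trans (ENNReal.le_tsum k)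
  simpa [probZ, ENNReal.toReal_mul, ENNReal.toReal_ofReal (b.γ_nonneg k)] using
    ENNReal.toReal_mono (measure_ne_top _ _) h

theorem γ_pos (h11 : 0 < b.probZ 1 1 1) (k : ℕ) : 0 < b.γ k := by
  refine (b.γ_nonneg k).lt_of_ne fun h0 => h11.ne' ?_
  have hp1 : ∀ᵐ e ∂b.μenv, b.p 1 (e 0) = 0 := by
    filter_upwards [(integral_eq_zero_iff_of_nonneg (f := fun e : ℕ → E => b.p 1 (e 0) ^ k)
      (fun e => pow_nonneg (b.p_nonneg 1 (e 0)) k) (b.integrable_p_one_pow k)).1 h0.symm]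
      with e he
    exact eq_zero_of_pow_eq_zero he
  rw [probZ, P_apply_one, transProb, lintegral_congr_ae (g := fun _ => 0), lintegral_zero,
    ENNReal.toReal_zero]
  filter_upwards [hp1] with e he
  rw [convPow_one, he, ENNReal.ofReal_zero]

theorem monotone_probZ_div_γ_pow (h11 : 0 < b.probZ 1 1 1) (k j : ℕ) :
    Monotone fun n => b.probZ k n j / b.γ k ^ n :=
  monotone_div_pow_of_mul_le_succ (b.γ_pos h11 k) fun n => b.γ_mul_probZ_le k n j

theorem hasSum_probZ_mul_pow (k n : ℕ) {t : ℝ} (ht : |t| ≤ 1) :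
    HasSum (fun j => b.probZ k n j * t ^ j) (∫ ω, t ^ ω.2 n ∂b.P k) := by
  have hZ : Measurable fun ω : (ℕ → E) × (ℕ → ℕ) => ω.2 n :=
    (measurable_pi_apply n).comp measurable_snd
  have hint : Integrable (fun j : ℕ => t ^ j) ((b.P k).map fun ω => ω.2 n) :=
    Integrable.of_bound (measurable_of_countable _).aestronglyMeasurable 1
      (ae_of_all _ fun j => by simpa [abs_pow] using pow_le_one₀ (abs_nonneg t) ht)
  convert hasSum_integral_of_countable hint using 1
  · ext j
    rw [measureReal_def, Measure.map_apply hZ (measurableSet_singleton j)]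
    rfl
  · exact (integral_map hZ.aemeasurable hint.aestronglyMeasurable).symm

/-- `t · alpha t x` is the generating function of the offspring law of `x` with all the mass
of `{2, 3, …}` moved to `2`; when `p₀ = 0` it dominates the true generating function on `[0, 1]`. -/
def alpha (t : ℝ) (x : E) : ℝ := b.p 1 x + (1 - b.p 1 x) * t

def beta (t : ℝ) (i : ℕ) : ℝ≥0∞ := ∫⁻ e, ENNReal.ofReal (b.alpha t (e 0)) ^ i ∂b.μenv

theorem measurable_alpha (t : ℝ) : Measurable (b.alpha t) :=
  (b.p_meas 1).add ((measurable_const.sub (b.p_meas 1)).mul measurable_const)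

theorem alpha_le_one {t : ℝ} (ht1 : t ≤ 1) (x : E) : b.alpha t x ≤ 1 := by
  unfold alpha
  nlinarith [mul_nonneg (sub_nonneg.2 (b.p_le_one 1 x)) (sub_nonneg.2 ht1)]

theorem alpha_lt_one {t : ℝ} (ht1 : t < 1) {x : E} (hx : b.p 1 x ≠ 1) : b.alpha t x < 1 := by
  unfold alpha
  nlinarith [mul_pos (sub_pos.2 ((b.p_le_one 1 x).lt_of_ne hx)) (sub_pos.2 ht1)]

theorem beta_le_one {t : ℝ} (ht1 : t ≤ 1) (i : ℕ) : b.beta t i ≤ 1 :=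
  (lintegral_mono fun (_ : ℕ → E) =>
    pow_le_one' (ENNReal.ofReal_le_one.2 (b.alpha_le_one ht1 _)) i).trans (by simp)

theorem beta_antitone {t : ℝ} (ht1 : t ≤ 1) : Antitone (b.beta t) := fun _ _ hij =>
  lintegral_mono fun _ =>
    pow_le_pow_right_of_le_one' (ENNReal.ofReal_le_one.2 (b.alpha_le_one ht1 _)) hij

theorem tendsto_beta {t : ℝ} (ht1 : t < 1) :
    Tendsto (b.beta t) atTop (𝓝 (b.μenv {e | b.p 1 (e 0) = 1})) := by
  have hA : MeasurableSet {e : ℕ → E | b.p 1 (e 0) = 1} :=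
    measurableSet_eq_fun ((b.p_meas 1).comp (measurable_pi_apply 0)) measurable_const
  rw [← lintegral_indicator_one hA]
  refine tendsto_lintegral_of_dominated_convergence (fun _ => 1)
    (fun i => (((b.measurable_alpha t).comp (measurable_pi_apply 0)).ennreal_ofReal.pow_const i))
    (fun i => ae_of_all _ fun _ =>
      pow_le_one' (ENNReal.ofReal_le_one.2 (b.alpha_le_one ht1.le _)) i)
    (by simp) (ae_of_all _ fun e => ?_)
  by_cases he : b.p 1 (e 0) = 1
  · simp [alpha, he]
  · rw [Set.indicator_of_notMem (show e ∉ {e | b.p 1 (e 0) = 1} from he)]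
    exact ENNReal.tendsto_pow_atTop_nhds_zero_of_lt_one
      (ENNReal.ofReal_lt_one.2 (b.alpha_lt_one ht1 he))

theorem tsum_ofReal_p_mul_pow_le {x : E} (hx : b.p 0 x = 0) {t : ℝ} (ht0 : 0 ≤ t) (ht1 : t ≤ 1) :
    ∑' d, ENNReal.ofReal (b.p d x) * ENNReal.ofReal t ^ d
      ≤ ENNReal.ofReal t * ENNReal.ofReal (b.alpha t x) := by
  set s := ENNReal.ofReal t
  have hp1 : 0 ≤ 1 - b.p 1 x := sub_nonneg.2 (b.p_le_one 1 x)
  have htail : ∑' d, ENNReal.ofReal (b.p (d + 2) x) = ENNReal.ofReal (1 - b.p 1 x) := by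
    have h :=
      ENNReal.summable.sum_add_tsum_nat_add' (f := fun d => ENNReal.ofReal (b.p d x)) (k := 2)
    rw [← ENNReal.ofReal_tsum_of_nonneg (fun d => b.p_nonneg d x) (b.summable_p x), b.p_tsum x] at h
    simp only [Finset.sum_range_succ, Finset.sum_range_zero, hx, ENNReal.ofReal_zero, zero_add] at h
    rw [ENNReal.ofReal_sub _ (b.p_nonneg 1 x), ENNReal.ofReal_one, ← ENNReal.ofReal_one, ← h,
      ENNReal.add_sub_cancel_left ENNReal.ofReal_ne_top]
  calc ∑' d, ENNReal.ofReal (b.p d x) * s ^ d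
      = ENNReal.ofReal (b.p 1 x) * s + ∑' d, ENNReal.ofReal (b.p (d + 2) x) * s ^ (d + 2) := by
        rw [← ENNReal.summable.sum_add_tsum_nat_add' (k := 2)]
        simp [Finset.sum_range_succ, hx]
    _ ≤ ENNReal.ofReal (b.p 1 x) * s + ∑' d, ENNReal.ofReal (b.p (d + 2) x) * s ^ 2 := by
        refine add_le_add_right (ENNReal.tsum_le_tsum fun d => mul_le_mul' le_rfl ?_) _
        exact pow_le_pow_right_of_le_one' (ENNReal.ofReal_le_one.2 ht1) (Nat.le_add_left 2 d)
    _ = s * ENNReal.ofReal (b.alpha t x) := by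
        rw [ENNReal.tsum_mul_right, htail, alpha, ENNReal.ofReal_add (b.p_nonneg 1 x)
          (mul_nonneg hp1 ht0), ENNReal.ofReal_mul hp1]
        ring

theorem tsum_transProb_mul_pow_le (hp0 : ∀ᵐ e ∂b.μenv, b.p 0 (e 0) = 0) {t : ℝ} (ht0 : 0 ≤ t)
    (ht1 : t ≤ 1) (i : ℕ) :
    ∑' j, b.transProb i j * ENNReal.ofReal t ^ j ≤ ENNReal.ofReal t ^ i * b.beta t i := by
  have hconv : ∀ j, Measurable fun e : ℕ → E => ENNReal.ofReal (convPow b.p i (e 0) j) :=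
    fun j => ((measurable_convPow b.p_meas i j).comp (measurable_pi_apply 0)).ennreal_ofReal
  calc ∑' j, b.transProb i j * ENNReal.ofReal t ^ j
      = ∫⁻ e, ∑' j, ENNReal.ofReal (convPow b.p i (e 0) j) * ENNReal.ofReal t ^ j ∂b.μenv := by
        rw [lintegral_tsum fun j => ((hconv j).mul_const _).aemeasurable]
        exact tsum_congr fun j => (lintegral_mul_const _ (hconv j)).symm
    _ = ∫⁻ e, (∑' d, ENNReal.ofReal (b.p d (e 0)) * ENNReal.ofReal t ^ d) ^ i ∂b.μenv := by
        simp_rw [tsum_ofReal_convPow_mul_pow b.p_nonneg]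
    _ ≤ ∫⁻ e, (ENNReal.ofReal t * ENNReal.ofReal (b.alpha t (e 0))) ^ i ∂b.μenv := by
        refine lintegral_mono_ae ?_
        filter_upwards [hp0] with e he
        gcongr
        exact b.tsum_ofReal_p_mul_pow_le he ht0 ht1
    _ = ENNReal.ofReal t ^ i * b.beta t i := by
        simp_rw [mul_pow]
        exact lintegral_const_mul _
          (((b.measurable_alpha t).comp (measurable_pi_apply 0)).ennreal_ofReal.pow_const i)

theorem measure_p_one_eq_one_lt_γ (hlog : 0 < ∫ e, Real.log (b.m (e 0)) ∂b.μenv) {k : ℕ}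
    (hγ : 0 < b.γ k) {r : ℝ} (hr : b.γ k = ∫ e, b.m (e 0) ^ (-r) ∂b.μenv) :
    b.μenv {e | b.p 1 (e 0) = 1} < ENNReal.ofReal (b.γ k) := by
  set A := {e : ℕ → E | b.p 1 (e 0) = 1}
  set h : (ℕ → E) → ℝ := fun e => b.m (e 0) ^ (-r)
  have hA : MeasurableSet A :=
    measurableSet_eq_fun ((b.p_meas 1).comp (measurable_pi_apply 0)) measurable_const
  have hint : Integrable h b.μenv := by
    by_contra hni
    rw [integral_undef hni] at hr
    exact hγ.ne' hr
  set g : (ℕ → E) → ℝ := A.indicator 1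
  have hind : g ≤ h := fun e => by
    by_cases he : e ∈ A
    · simp [g, h, he, b.m_eq_one_of_p_one_eq_one (show b.p 1 (e 0) = 1 from he)]
    · simpa [g, he] using Real.rpow_nonneg (b.m_nonneg (e 0)) (-r)
  have hgint : Integrable g b.μenv := (integrable_const 1).indicator hA
  by_contra hAγ
  have hγA : b.γ k ≤ b.μenv.real A :=
    (ENNReal.ofReal_le_iff_le_toReal (measure_ne_top _ _)).1 (not_lt.1 hAγ)
  have hg : ∫ e, g e ∂b.μenv = b.μenv.real A := integral_indicator_one hA
  have hae : g =ᵐ[b.μenv] h := (integral_eq_iff_of_ae_le hgint hint (ae_of_all _ hind)).1 <|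
    le_antisymm (integral_mono hgint hint hind) (by linarith)
  have hlog0 : ∫ e, Real.log (b.m (e 0)) ∂b.μenv = 0 := by
    refine integral_eq_zero_of_ae ?_
    filter_upwards [hae] with e he
    by_cases heA : e ∈ A
    · simp [b.m_eq_one_of_p_one_eq_one (show b.p 1 (e 0) = 1 from heA)]
    · have hm : b.m (e 0) ^ (-r) = 0 := by simpa [g, h, heA] using he.symm
      simp [((Real.rpow_eq_zero_iff_of_nonneg (b.m_nonneg _)).1 hm).1]
  exact hlog.ne' hlog0

theorem tsum_transProb_mul_pow_le_one (hp0 : ∀ᵐ e ∂b.μenv, b.p 0 (e 0) = 0) {t : ℝ}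
    (ht0 : 0 ≤ t) (ht1 : t ≤ 1) (i : ℕ) : ∑' j, b.transProb i j * ENNReal.ofReal t ^ j ≤ 1 :=
  (b.tsum_transProb_mul_pow_le hp0 ht0 ht1 i).trans
    (mul_le_one' (pow_le_one' (ENNReal.ofReal_le_one.2 ht1) i) (b.beta_le_one ht1 i))

theorem lintegral_pow_succ_le (hp0 : ∀ᵐ e ∂b.μenv, b.p 0 (e 0) = 0) {t : ℝ} (ht0 : 0 ≤ t)
    (ht1 : t ≤ 1) (k n I : ℕ) :
    ∫⁻ ω, ENNReal.ofReal t ^ ω.2 (n + 1) ∂b.P k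
      ≤ ∑ i ∈ Finset.range I, b.P k {ω | ω.2 n = i}
        + b.beta t I * ∫⁻ ω, ENNReal.ofReal t ^ ω.2 n ∂b.P k := by
  set s := ENNReal.ofReal t
  set a : ℕ → ℝ≥0∞ := fun i => b.P k {ω | ω.2 n = i}
  have hZ : ∀ m, Measurable fun ω : (ℕ → E) × (ℕ → ℕ) => ω.2 m :=
    fun m => (measurable_pi_apply m).comp measurable_snd
  have hstep : ∀ i, a i * ∑' j, b.transProb i j * s ^ j
      ≤ (if i < I then a i else 0) + b.beta t I * (s ^ i * a i) := by
    intro i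
    split_ifs with hiI
    · exact le_add_right (mul_le_of_le_one_right' (b.tsum_transProb_mul_pow_le_one hp0 ht0 ht1 i))
    · rw [zero_add, show b.beta t I * (s ^ i * a i) = a i * (s ^ i * b.beta t I) by ring]
      exact mul_le_mul' le_rfl ((b.tsum_transProb_mul_pow_le hp0 ht0 ht1 i).trans
        (mul_le_mul' le_rfl (b.beta_antitone ht1 (not_lt.1 hiI))))
  calc ∫⁻ ω, s ^ ω.2 (n + 1) ∂b.P k
      = ∑' i, a i * ∑' j, b.transProb i j * s ^ j := by
        rw [lintegral_comp_eq_tsum _ (hZ (n + 1)) (s ^ ·)]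
        simp_rw [P_apply_succ, ← ENNReal.tsum_mul_left]
        rw [ENNReal.tsum_comm]
        exact tsum_congr fun i => tsum_congr fun j => by ring
    _ ≤ ∑' i, ((if i < I then a i else 0) + b.beta t I * (s ^ i * a i)) :=
        ENNReal.tsum_le_tsum hstep
    _ = ∑ i ∈ Finset.range I, a i + b.beta t I * ∫⁻ ω, s ^ ω.2 n ∂b.P k := by
        rw [ENNReal.tsum_add, ENNReal.tsum_mul_left, lintegral_comp_eq_tsum _ (hZ n) (s ^ ·),
          tsum_eq_sum (s := Finset.range I) fun i hi => if_neg (by simpa using hi)]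
        exact congrArg (· + _) (Finset.sum_congr rfl fun i hi => if_pos (by simpa using hi))

theorem integral_pow_succ_le (hp0 : ∀ᵐ e ∂b.μenv, b.p 0 (e 0) = 0) {t : ℝ} (ht0 : 0 ≤ t)
    (ht1 : t ≤ 1) (k n I : ℕ) :
    ∫ ω, t ^ ω.2 (n + 1) ∂b.P k
      ≤ ∑ i ∈ Finset.range I, b.probZ k n i + (b.beta t I).toReal * ∫ ω, t ^ ω.2 n ∂b.P k := by
  have hG : ∀ m, ∫ ω, t ^ ω.2 m ∂b.P k = (∫⁻ ω, ENNReal.ofReal t ^ ω.2 m ∂b.P k).toReal := by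
    intro m
    rw [integral_eq_lintegral_of_nonneg_ae (ae_of_all _ fun ω => pow_nonneg ht0 _)
      (measurable_from_top.comp ((measurable_pi_apply m).comp measurable_snd)).aestronglyMeasurable]
    simp_rw [ENNReal.ofReal_pow ht0]
  have hfin : ∀ m, ∫⁻ ω, ENNReal.ofReal t ^ ω.2 m ∂b.P k ≠ ⊤ := fun m =>
    ne_top_of_le_ne_top ENNReal.one_ne_top <|
      (lintegral_mono fun _ => pow_le_one' (ENNReal.ofReal_le_one.2 ht1) _).trans (by simp)
  have hβ : b.beta t I ≠ ⊤ := ne_top_of_le_ne_top ENNReal.one_ne_top (b.beta_le_one ht1 I)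
  simp only [hG, probZ]
  rw [← ENNReal.toReal_sum fun i _ => measure_ne_top _ _, ← ENNReal.toReal_mul,
    ← ENNReal.toReal_add (ENNReal.sum_ne_top.2 fun i _ => measure_ne_top _ _)
      (ENNReal.mul_ne_top hβ (hfin n))]
  exact ENNReal.toReal_mono (ENNReal.add_ne_top.2 ⟨ENNReal.sum_ne_top.2 fun i _ =>
    measure_ne_top _ _, ENNReal.mul_ne_top hβ (hfin n)⟩) (b.lintegral_pow_succ_le hp0 ht0 ht1 k n I)

theorem exists_integral_pow_div_γ_pow_le (hstand : b.Standing) (h11 : 0 < b.probZ 1 1 1) {k : ℕ}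
    {r : ℝ} (hr : b.γ k = ∫ e, b.m (e 0) ^ (-r) ∂b.μenv) {t : ℝ} (ht0 : 0 ≤ t) (ht1 : t < 1)
    {c : ℕ → ℝ} (hc : ∀ j, Tendsto (fun n => b.probZ k n j / b.γ k ^ n) atTop (𝓝 (c j))) :
    ∃ M, ∀ n, (∫ ω, t ^ ω.2 n ∂b.P k) / b.γ k ^ n ≤ M := by
  have hγ := b.γ_pos h11 k
  obtain ⟨I, hI⟩ := ((tendsto_order.1 (b.tendsto_beta ht1)).2 _
    (b.measure_p_one_eq_one_lt_γ hstand.2.1 hγ hr)).exists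
  have hρ : (b.beta t I).toReal < b.γ k := by
    simpa [ENNReal.toReal_ofReal hγ.le] using ENNReal.toReal_strict_mono ENNReal.ofReal_ne_top hI
  have hP : ∀ n i, b.probZ k n i ≤ c i * b.γ k ^ n := fun n i =>
    (div_le_iff₀ (pow_pos hγ n)).1 ((b.monotone_probZ_div_γ_pow h11 k i).ge_of_tendsto (hc i) n)
  refine ⟨_, div_pow_le_max_of_le_add_mul (C := ∑ i ∈ Finset.range I, c i)
    ENNReal.toReal_nonneg hρ fun n => ?_⟩
  calc ∫ ω, t ^ ω.2 (n + 1) ∂b.P k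
      ≤ ∑ i ∈ Finset.range I, b.probZ k n i + (b.beta t I).toReal * ∫ ω, t ^ ω.2 n ∂b.P k :=
        b.integral_pow_succ_le hstand.2.2 ht0 ht1.le k n I
    _ ≤ (∑ i ∈ Finset.range I, c i) * b.γ k ^ n + (b.beta t I).toReal * ∫ ω, t ^ ω.2 n ∂b.P k := by
        rw [Finset.sum_mul]
        gcongr with i
        exact hP n i

end BPRE

theorem pgf_normalized_convergence_general {E : Type*} [MeasurableSpace E] (b : BPRE E)
    (hstand : b.Standing) (hZ11 : 0 < b.probZ 1 1 1)
    (k : ℕ) (rk : ℝ)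
    (hrk : b.γ k = ∫ e, b.m (e 0) ^ (-rk) ∂b.μenv)
    (q : ℕ → ℝ)
    (hq : ∀ j, k ≤ j → Tendsto (fun n => b.probZ k n j / b.γ k ^ n) atTop (𝓝 (q j))) :
    ∀ t : ℝ, 0 ≤ t → t < 1 →
      Monotone (fun n => (∫ ω, t ^ (ω.2 n) ∂b.P k) / b.γ k ^ n) ∧
        Tendsto (fun n => (∫ ω, t ^ (ω.2 n) ∂b.P k) / b.γ k ^ n) atTop
          (𝓝 (∑' j : ℕ, if k ≤ j then q j * t ^ j else 0)) := by
  intro t ht0 ht1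
  have hlim : ∀ j, Tendsto (fun n => b.probZ k n j / b.γ k ^ n) atTop
      (𝓝 (if k ≤ j then q j else 0)) := by
    intro j
    split_ifs with hkj
    · exact hq j hkj
    · simp [BPRE.probZ, b.P_apply_eq_zero_of_lt hstand.2.2 _ (not_le.1 hkj)]
  obtain ⟨M, hM⟩ := b.exists_integral_pow_div_γ_pow_le hstand hZ11 hrk ht0 ht1 hlim
  have hG : ∀ n, HasSum (fun j => b.probZ k n j / b.γ k ^ n * t ^ j)
      ((∫ ω, t ^ ω.2 n ∂b.P k) / b.γ k ^ n) := fun n => by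
    simpa only [div_mul_eq_mul_div] using
      (b.hasSum_probZ_mul_pow k n (abs_le.2 ⟨by linarith, ht1.le⟩)).div_const (b.γ k ^ n)
  have h := tendsto_tsum_of_monotone_of_tsum_le
    (f := fun n j => b.probZ k n j / b.γ k ^ n * t ^ j) (M := M)
    (fun n j => mul_nonneg (div_nonneg ENNReal.toReal_nonneg (pow_nonneg (b.γ_nonneg k) n))
      (pow_nonneg ht0 j))
    (fun j => (b.monotone_probZ_div_γ_pow hZ11 k j).mul_const (pow_nonneg ht0 j))
    (fun j => (hlim j).mul_const (t ^ j)) (fun n => (hG n).summable)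
    (fun n => (hG n).tsum_eq ▸ hM n)
  simp only [fun n => (hG n).tsum_eq, ite_mul, zero_mul] at h
  exact h

/-- **Theorem 2 c) (convergence of the normalized generating functions).**  For a
supercritical BPRE with `p₀(ξ₀) = 0` a.s. and `ℙ(Z₁ = 1 | Z₀ = 1) > 0`, fix `k ≥ 1`,
let `rk > 0` solve `γ_k = 𝔼[m₀ ^ (-rk)]` and assume `𝔼[m₀ ^ (rk + ε)] < ∞` for some
`ε > 0`.  If `q j = q_{k,j} = lim_n ℙ_k(Z_n = j)/γ_k ^ n` for `j ≥ k`, then for every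
`t ∈ [0,1)` the sequence `n ↦ G_{k,n}(t)/γ_k ^ n` (where `G_{k,n}(t) = 𝔼_k[t ^ Z_n]`)
is nondecreasing and converges to `Q_k(t) = ∑_{j ≥ k} q_{k,j} t ^ j`. -/
theorem pgf_normalized_convergence {E : Type*} [MeasurableSpace E] (b : BPRE E)
    (hstand : b.Standing) (hZ11 : 0 < b.probZ 1 1 1)
    (k : ℕ) (hk : 1 ≤ k)
    (rk : ℝ) (hrk_pos : 0 < rk)
    (hrk : b.γ k = ∫ e, b.m (e 0) ^ (-rk) ∂b.μenv)
    (ε : ℝ) (hε : 0 < ε)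
    (hmom : Integrable (fun e : ℕ → E => b.m (e 0) ^ (rk + ε)) b.μenv)
    (q : ℕ → ℝ)
    (hq : ∀ j, k ≤ j → Tendsto (fun n => b.probZ k n j / b.γ k ^ n) atTop (𝓝 (q j))) :
    ∀ t : ℝ, 0 ≤ t → t < 1 →
      Monotone (fun n => (∫ ω, t ^ (ω.2 n) ∂b.P k) / b.γ k ^ n) ∧
        Tendsto (fun n => (∫ ω, t ^ (ω.2 n) ∂b.P k) / b.γ k ^ n) atTop
          (𝓝 (∑' j : ℕ, if k ≤ j then q j * t ^ j else 0)) :=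
  pgf_normalized_convergence_general b hstand hZ11 k rk hrk q hq
end
end

section
/- Let φ : ℝ₊ → ℝ₊ be a bounded function and let Y be a positive random variable. Suppose there are constants q ∈ (0,1), a ∈ (0, ∞), C > 0 and t₀ ≥ 0 such that φ(t) ≤ q·𝔼[φ(Y t)] + C·t^{−a} for all t > t₀. If q·𝔼[Y^{−a}] < 1, then φ(t) = O(t^{−a}) as t → ∞; that is, there exists a constant C' > 0 such that φ(t) ≤ C'·t^{−a} for all sufficiently large t. -/
open MeasureTheory Filter
open scoped ENNReal Topology

/-!
Let `M` bound `φ` and iterate the inequation. If `φ s ≤ A + L s^(-a)` for all `s > 0`, then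
for `t > t₀` the inequation gives `φ t ≤ q A + (q 𝔼[Y^(-a)] L + C) t^(-a)`, while for
`0 < t ≤ t₀` the bound `φ t ≤ M ≤ M t₀^a t^(-a)` is available. Hence, for `L ≥ M t₀^a` with
`q 𝔼[Y^(-a)] L + C ≤ L` (possible exactly because `q 𝔼[Y^(-a)] < 1`), the bound passes from `A`
to `q A`. Starting from `A = M` and letting the number of iterations tend to infinity gives
`φ t ≤ L t^(-a)`.
-/

theorem one_le_rpow_mul_rpow_neg {s t a : ℝ} (hs : 0 < s) (hst : s ≤ t) (ha : 0 ≤ a) :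
    1 ≤ t ^ a * s ^ (-a) := by
  have h : t ^ a * s ^ (-a) = (t / s) ^ a := by
    rw [Real.div_rpow (hs.le.trans hst) hs.le, Real.rpow_neg hs.le, div_eq_mul_inv]
  rw [h]
  exact Real.one_le_rpow ((one_le_div hs).2 hst) ha

section

variable {Ω : Type*} [MeasurableSpace Ω] {μ : Measure Ω}

theorem norm_integral_le_add_mul_of_ae_norm_le [IsProbabilityMeasure μ]
    {G : Type*} [NormedAddCommGroup G] [NormedSpace ℝ G] {f : Ω → G} {g : Ω → ℝ} {A B : ℝ}
    (hA : 0 ≤ A) (hB : 0 ≤ B) (hg : ∫⁻ ω, ENNReal.ofReal (g ω) ∂μ ≠ ∞)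
    (hfg : ∀ᵐ ω ∂μ, ‖f ω‖ ≤ A + B * g ω) :
    ‖∫ ω, f ω ∂μ‖ ≤ A + B * (∫⁻ ω, ENNReal.ofReal (g ω) ∂μ).toReal := by
  -- Passing through lower integrals avoids any measurability assumption on `f` or `g`.
  set I := ∫⁻ ω, ENNReal.ofReal (g ω) ∂μ
  have hle : ∫⁻ ω, ENNReal.ofReal ‖f ω‖ ∂μ ≤ ENNReal.ofReal A + ENNReal.ofReal B * I :=
    calc ∫⁻ ω, ENNReal.ofReal ‖f ω‖ ∂μ
        ≤ ∫⁻ ω, (ENNReal.ofReal A + ENNReal.ofReal B * ENNReal.ofReal (g ω)) ∂μ := by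
          refine lintegral_mono_ae (hfg.mono fun ω h => ?_)
          rw [← ENNReal.ofReal_mul hB]
          exact (ENNReal.ofReal_le_ofReal h).trans ENNReal.ofReal_add_le
      _ = ENNReal.ofReal A + ENNReal.ofReal B * I := by
          rw [lintegral_add_left measurable_const, lintegral_const, measure_univ, mul_one,
            lintegral_const_mul' _ _ ENNReal.ofReal_ne_top]
  calc ‖∫ ω, f ω ∂μ‖ ≤ (∫⁻ ω, ENNReal.ofReal ‖f ω‖ ∂μ).toReal := norm_integral_le_lintegral_norm f
    _ ≤ (ENNReal.ofReal A + ENNReal.ofReal B * I).toReal := ENNReal.toReal_mono (by finiteness) hle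
    _ = A + B * I.toReal := by
      rw [ENNReal.toReal_add (by finiteness) (by finiteness), ENNReal.toReal_mul,
        ENNReal.toReal_ofReal hA, ENNReal.toReal_ofReal hB]

variable [IsProbabilityMeasure μ] {Y : Ω → ℝ} {φ : ℝ → ℝ} {q a C t₀ M L A : ℝ}

theorem le_mul_add_mul_rpow_neg_of_le_add_mul_rpow_neg
    (hY_pos : ∀ᵐ ω ∂μ, 0 < Y ω) (hφ_nonneg : ∀ t, 0 ≤ t → 0 ≤ φ t)
    (hφ_le : ∀ t, 0 ≤ t → φ t ≤ M) (hM : 0 ≤ M) (hq : 0 ≤ q) (ha : 0 ≤ a)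
    (hrec : ∀ t, t₀ < t → φ t ≤ q * ∫ ω, φ (Y ω * t) ∂μ + C * t ^ (-a))
    (hmom : ∫⁻ ω, ENNReal.ofReal (Y ω ^ (-a)) ∂μ ≠ ∞) (hL : 0 ≤ L) (hML : M * t₀ ^ a ≤ L)
    (hCL : q * (∫⁻ ω, ENNReal.ofReal (Y ω ^ (-a)) ∂μ).toReal * L + C ≤ L) (hA : 0 ≤ A)
    (hbound : ∀ s, 0 < s → φ s ≤ A + L * s ^ (-a)) :
    ∀ t, 0 < t → φ t ≤ q * A + L * t ^ (-a) := by
  intro t ht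
  have hqA : 0 ≤ q * A := mul_nonneg hq hA
  rcases le_or_gt t t₀ with htt₀ | htt₀
  · calc φ t ≤ M := hφ_le t ht.le
      _ ≤ M * (t₀ ^ a * t ^ (-a)) := le_mul_of_one_le_right hM (one_le_rpow_mul_rpow_neg ht htt₀ ha)
      _ = M * t₀ ^ a * t ^ (-a) := by ring
      _ ≤ L * t ^ (-a) := by gcongr
      _ ≤ q * A + L * t ^ (-a) := le_add_of_nonneg_left hqA
  set m := (∫⁻ ω, ENNReal.ofReal (Y ω ^ (-a)) ∂μ).toReal
  have hpt : ∀ᵐ ω ∂μ, ‖φ (Y ω * t)‖ ≤ A + L * t ^ (-a) * Y ω ^ (-a) := by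
    filter_upwards [hY_pos] with ω hω
    have hYt := mul_pos hω ht
    rw [Real.norm_of_nonneg (hφ_nonneg _ hYt.le), mul_assoc, mul_comm (t ^ (-a)),
      ← Real.mul_rpow hω.le ht.le]
    exact hbound _ hYt
  have hint : ∫ ω, φ (Y ω * t) ∂μ ≤ A + L * t ^ (-a) * m :=
    (le_abs_self _).trans (norm_integral_le_add_mul_of_ae_norm_le hA (by positivity) hmom hpt)
  calc φ t ≤ q * ∫ ω, φ (Y ω * t) ∂μ + C * t ^ (-a) := hrec t htt₀
    _ ≤ q * (A + L * t ^ (-a) * m) + C * t ^ (-a) := by gcongr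
    _ = q * A + (q * m * L + C) * t ^ (-a) := by ring
    _ ≤ q * A + L * t ^ (-a) := by gcongr

theorem le_mul_rpow_neg_of_le_mul_integral_add_mul_rpow_neg
    (hY_pos : ∀ᵐ ω ∂μ, 0 < Y ω) (hφ_nonneg : ∀ t, 0 ≤ t → 0 ≤ φ t)
    (hφ_le : ∀ t, 0 ≤ t → φ t ≤ M) (hM : 0 ≤ M) (hq : 0 ≤ q) (hq1 : q < 1) (ha : 0 ≤ a)
    (hrec : ∀ t, t₀ < t → φ t ≤ q * ∫ ω, φ (Y ω * t) ∂μ + C * t ^ (-a))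
    (hmom : ∫⁻ ω, ENNReal.ofReal (Y ω ^ (-a)) ∂μ ≠ ∞) (hL : 0 ≤ L) (hML : M * t₀ ^ a ≤ L)
    (hCL : q * (∫⁻ ω, ENNReal.ofReal (Y ω ^ (-a)) ∂μ).toReal * L + C ≤ L) :
    ∀ t, 0 < t → φ t ≤ L * t ^ (-a) := by
  have hiter : ∀ n : ℕ, ∀ t, 0 < t → φ t ≤ q ^ n * M + L * t ^ (-a) := by
    intro n
    induction n with
    | zero =>
      intro t ht
      simpa using (hφ_le t ht.le).trans (le_add_of_nonneg_right (by positivity))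
    | succ n ih =>
      simpa only [pow_succ', mul_assoc] using
        le_mul_add_mul_rpow_neg_of_le_add_mul_rpow_neg hY_pos hφ_nonneg hφ_le hM hq ha hrec hmom
          hL hML hCL (by positivity) ih
  intro t ht
  have hlim : Tendsto (fun n : ℕ => q ^ n * M + L * t ^ (-a)) atTop (𝓝 (L * t ^ (-a))) := by
    simpa using ((tendsto_pow_atTop_nhds_zero_of_lt_one hq hq1).mul_const M).add_const
      (L * t ^ (-a))
  exact ge_of_tendsto' hlim fun n => hiter n t ht

end

theorem decay_rate_functional_inequation_general
    {Ω : Type*} [MeasurableSpace Ω] (μ : Measure Ω) [IsProbabilityMeasure μ]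
    (Y : Ω → ℝ) (hY_pos : ∀ᵐ ω ∂μ, 0 < Y ω)
    (φ : ℝ → ℝ)
    (hφ_nonneg : ∀ t, 0 ≤ t → 0 ≤ φ t) (hφ_bdd : ∃ M, ∀ t, 0 ≤ t → φ t ≤ M)
    (q a C t₀ : ℝ) (hq0 : 0 < q) (hq1 : q < 1) (ha : 0 < a) (ht₀ : 0 ≤ t₀)
    (hrec : ∀ t, t₀ < t → φ t ≤ q * ∫ ω, φ (Y ω * t) ∂μ + C * t ^ (-a))
    (hmom : ENNReal.ofReal q * ∫⁻ ω, ENNReal.ofReal (Y ω ^ (-a)) ∂μ < 1) :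
    ∃ C' > 0, ∀ᶠ t in atTop, φ t ≤ C' * t ^ (-a) := by
  obtain ⟨M, hφ_le⟩ := hφ_bdd
  have hM : 0 ≤ M := (hφ_nonneg 0 le_rfl).trans (hφ_le 0 le_rfl)
  have hmom_fin : ∫⁻ ω, ENNReal.ofReal (Y ω ^ (-a)) ∂μ ≠ ∞ := fun h => by
    simp [h, ENNReal.mul_top (ENNReal.ofReal_pos.2 hq0).ne'] at hmom
  set m := (∫⁻ ω, ENNReal.ofReal (Y ω ^ (-a)) ∂μ).toReal
  have hqm : q * m < 1 := by
    have := ENNReal.toReal_lt_of_lt_ofReal (hmom.trans_eq ENNReal.ofReal_one.symm)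
    rwa [ENNReal.toReal_mul, ENNReal.toReal_ofReal hq0.le] at this
  set L := max (M * t₀ ^ a) (C / (1 - q * m))
  have hL : 0 ≤ L := le_max_of_le_left (by positivity)
  have hCL : q * m * L + C ≤ L := by
    have := (div_le_iff₀ (sub_pos.2 hqm)).1 (le_max_right (M * t₀ ^ a) (C / (1 - q * m)))
    linarith
  have hbound := le_mul_rpow_neg_of_le_mul_integral_add_mul_rpow_neg hY_pos hφ_nonneg hφ_le hM
    hq0.le hq1 ha.le hrec hmom_fin hL (le_max_left _ _) hCL
  refine ⟨L + 1, by linarith, ?_⟩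
  filter_upwards [eventually_gt_atTop 0] with t ht
  exact (hbound t ht).trans (by gcongr; linarith)

/-- **Lemma 4.1 of Liu (1999) (decay rate of solutions of a functional inequation).**
Let `φ : ℝ₊ → ℝ₊` be a bounded (measurable) function and let `Y` be a positive random
variable.  Suppose there are constants `q ∈ (0,1)`, `a ∈ (0,∞)`, `C > 0` and `t₀ ≥ 0`
such that `φ(t) ≤ q * 𝔼[φ(Y t)] + C * t ^ (-a)` for all `t > t₀`.
If `q * 𝔼[Y ^ (-a)] < 1`, then `φ(t) = O(t ^ (-a))` as `t → ∞`; that is, there is a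
constant `C' > 0` such that `φ(t) ≤ C' * t ^ (-a)` for all sufficiently large `t`. -/
theorem decay_rate_functional_inequation
    {Ω : Type*} [MeasurableSpace Ω] (μ : Measure Ω) [IsProbabilityMeasure μ]
    (Y : Ω → ℝ) (hY_meas : Measurable Y) (hY_pos : ∀ᵐ ω ∂μ, 0 < Y ω)
    (φ : ℝ → ℝ) (hφ_meas : Measurable φ)
    (hφ_nonneg : ∀ t, 0 ≤ t → 0 ≤ φ t) (hφ_bdd : ∃ M, ∀ t, 0 ≤ t → φ t ≤ M)
    (q a C t₀ : ℝ) (hq0 : 0 < q) (hq1 : q < 1) (ha : 0 < a) (hC : 0 < C) (ht₀ : 0 ≤ t₀)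
    (hrec : ∀ t, t₀ < t → φ t ≤ q * ∫ ω, φ (Y ω * t) ∂μ + C * t ^ (-a))
    (hmom : ENNReal.ofReal q * ∫⁻ ω, ENNReal.ofReal (Y ω ^ (-a)) ∂μ < 1) :
    ∃ C' > 0, ∀ᶠ t in atTop, φ t ≤ C' * t ^ (-a) :=
  decay_rate_functional_inequation_general μ Y hY_pos φ hφ_nonneg hφ_bdd q a C t₀ hq0 hq1 ha ht₀
    hrec hmom
end
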